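/- With the hypotheses of the previous contraction estimate, assume additionally ‖p − p_h‖_∞ ≤ C h^{k+1}, ‖∇p − ∇p_h‖_∞ ≤ C h^k, ‖∇p‖_∞ ≤ C h, ‖p_h‖_∞ ≤ C h^2, and that p is L-Lipschitz with L ≤ C h. Then |x − y| ≤ C' h^{k+2}, and moreover if x_3 = p_h(x) and y_3 = p(y), then |x_3 − y_3| ≤ ‖p_h − p‖_∞ + L|x − y| ≤ C'' h^{k+1}. -/

import Mathlib

/-!
Writing `p y • ∇p y - p_h x • ∇p_h x = (p y - p_h x) • ∇p y + p_h x • (∇p y - ∇p_h x)`, the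
first factor of each term is small (`O(h^{k+1})` resp. `O(h^2)`) and the second is `O(h)`
resp. `O(h^k)`, up to multiples of `‖x - y‖` whose total coefficient is at most `1 - c`.
Absorbing those into the left-hand side gives `‖x - y‖ = O(h^{k+2})`, and the vertical error
then follows from the triangle inequality through `p x`.
-/

lemma le_div_of_le_mul_add {α : Type*} [Field α] [LinearOrder α] [IsStrictOrderedRing α]
    {e q r c : α} (hc : 0 < c) (he : 0 ≤ e) (hq : q ≤ 1 - c) (h : e ≤ q * e + r) :
    e ≤ r / c := by
  rw [le_div_iff₀ hc]
  nlinarith [mul_le_mul_of_nonneg_right hq he]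

lemma norm_smul_sub_smul_le {E : Type*} [SeminormedAddCommGroup E] [NormedSpace ℝ E]
    (a b : ℝ) (u v : E) : ‖a • u - b • v‖ ≤ |a - b| * ‖u‖ + |b| * ‖u - v‖ := by
  have hsplit : a • u - b • v = (a - b) • u + b • (u - v) := by module
  rw [hsplit, ← Real.norm_eq_abs, ← Real.norm_eq_abs, ← norm_smul, ← norm_smul]
  exact norm_add_le _ _

lemma norm_sub_le_mul_add_of_eq_smul_sub_smul {E : Type*} [SeminormedAddCommGroup E]
    [NormedSpace ℝ E] {x y : E} {p ph : E → ℝ} {gp gph : E → E} {L L' M N ε δ : ℝ}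
    (hp : |p x - p y| ≤ L * ‖x - y‖) (hgph : ‖gph y - gph x‖ ≤ L' * ‖x - y‖)
    (hgp : ‖gp y‖ ≤ M) (hph : |ph x| ≤ N) (hpd : |p x - ph x| ≤ ε)
    (hgd : ‖gp y - gph y‖ ≤ δ) (heq : x - y = p y • gp y - ph x • gph x) :
    ‖x - y‖ ≤ (L * M + L' * N) * ‖x - y‖ + (ε * M + N * δ) := by
  have hval : |p y - ph x| ≤ L * ‖x - y‖ + ε := by
    calc |p y - ph x| ≤ |p y - p x| + |p x - ph x| := abs_sub_le _ _ _
      _ ≤ L * ‖x - y‖ + ε := by rw [abs_sub_comm]; gcongr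
  have hgrad : ‖gp y - gph x‖ ≤ δ + L' * ‖x - y‖ :=
    (norm_sub_le_norm_sub_add_norm_sub _ _ _).trans (add_le_add hgd hgph)
  have hM : 0 ≤ M := (norm_nonneg _).trans hgp
  have hN : 0 ≤ N := (abs_nonneg _).trans hph
  calc ‖x - y‖ ≤ |p y - ph x| * ‖gp y‖ + |ph x| * ‖gp y - gph x‖ := by
        rw [heq]; exact norm_smul_sub_smul_le _ _ _ _
    _ ≤ (L * ‖x - y‖ + ε) * M + N * (δ + L' * ‖x - y‖) := by
        gcongr
        exact (abs_nonneg _).trans hval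
    _ = (L * M + L' * N) * ‖x - y‖ + (ε * M + N * δ) := by ring

theorem stmt10_general (C c h : ℝ) (k : ℕ) (hC : 0 < C) (hc : 0 < c) (h0 : 0 < h) (h1 : h < 1)
    (D : Set (EuclideanSpace ℝ (Fin 2)))
    (p ph : EuclideanSpace ℝ (Fin 2) → ℝ) (L L' : ℝ)
    (hLip : ∀ a ∈ D, ∀ b ∈ D, |p a - p b| ≤ L * ‖a - b‖)
    (hLip' : ∀ a ∈ D, ∀ b ∈ D, ‖gradient ph a - gradient ph b‖ ≤ L' * ‖a - b‖)
    (hL : L ≤ C * h)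
    (hGp : ∀ z ∈ D, ‖gradient p z‖ ≤ C * h)
    (hPh : ∀ z ∈ D, |ph z| ≤ C * h ^ 2)
    (hPdiff : ∀ z ∈ D, |p z - ph z| ≤ C * h ^ (k + 1))
    (hGdiff : ∀ z ∈ D, ‖gradient p z - gradient ph z‖ ≤ C * h ^ k)
    (hsmall : L * (C * h) + L' * (C * h ^ 2) ≤ 1 - c)
    (x y : EuclideanSpace ℝ (Fin 2)) (hx : x ∈ D) (hy : y ∈ D)
    (heq : x - y = p y • gradient p y - ph x • gradient ph x) :
    ‖x - y‖ ≤ (2 * C ^ 2 / c) * h ^ (k + 2)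
      ∧ |ph x - p y| ≤ C * h ^ (k + 1) + L * ‖x - y‖
      ∧ C * h ^ (k + 1) + L * ‖x - y‖ ≤ (C + 2 * C ^ 3 / c) * h ^ (k + 1) := by
  have hcontr := norm_sub_le_mul_add_of_eq_smul_sub_smul (hLip x hx y hy)
    (by simpa only [norm_sub_rev x y] using hLip' y hy x hx)
    (hGp y hy) (hPh x hx) (hPdiff x hx) (hGdiff y hy) heq
  have hplane : ‖x - y‖ ≤ (2 * C ^ 2 / c) * h ^ (k + 2) := by
    rw [div_mul_eq_mul_div]
    refine le_div_of_le_mul_add hc (norm_nonneg _) hsmall (hcontr.trans_eq ?_)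
    ring
  refine ⟨hplane, ?_, ?_⟩
  · calc |ph x - p y| ≤ |ph x - p x| + |p x - p y| := abs_sub_le _ _ _
      _ ≤ C * h ^ (k + 1) + L * ‖x - y‖ := by
        rw [abs_sub_comm]; exact add_le_add (hPdiff x hx) (hLip x hx y hy)
  · calc C * h ^ (k + 1) + L * ‖x - y‖
        ≤ C * h ^ (k + 1) + C * h * ‖x - y‖ := by gcongr
      _ ≤ C * h ^ (k + 1) + C * h * ((2 * C ^ 2 / c) * h ^ (k + 2)) := by gcongr
      _ = C * h ^ (k + 1) + 2 * C ^ 3 / c * h ^ (k + 3) := by ring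
      _ ≤ C * h ^ (k + 1) + 2 * C ^ 3 / c * h ^ (k + 1) := by
        gcongr _ + 2 * C ^ 3 / c * ?_
        exact pow_le_pow_of_le_one h0.le h1.le (by omega)
      _ = (C + 2 * C ^ 3 / c) * h ^ (k + 1) := by ring

/-- Proposition 1 (nodal accuracy): under the contraction hypotheses with
`‖p − p_h‖_∞ ≤ C h^{k+1}`, `‖∇p − ∇p_h‖_∞ ≤ C h^k`, `‖∇p‖_∞ ≤ C h`, `‖p_h‖_∞ ≤ C h²`,
and `L ≤ C h`, the in-plane nodal error satisfies `‖x − y‖ ≤ (2C²/c) h^{k+2}` and the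
vertical error satisfies `|p_h(x) − p(y)| ≤ C h^{k+1} + L‖x − y‖ ≤ (C + 2C³/c) h^{k+1}`. -/
theorem stmt10 (C c h : ℝ) (k : ℕ) (hC : 0 < C) (hc : 0 < c) (h0 : 0 < h) (h1 : h < 1)
    (D : Set (EuclideanSpace ℝ (Fin 2))) (hD : Convex ℝ D)
    (p ph : EuclideanSpace ℝ (Fin 2) → ℝ) (L L' : ℝ)
    (hLip : ∀ a ∈ D, ∀ b ∈ D, |p a - p b| ≤ L * ‖a - b‖)
    (hLip' : ∀ a ∈ D, ∀ b ∈ D, ‖gradient ph a - gradient ph b‖ ≤ L' * ‖a - b‖)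
    (hL : L ≤ C * h)
    (hGp : ∀ z ∈ D, ‖gradient p z‖ ≤ C * h)
    (hPh : ∀ z ∈ D, |ph z| ≤ C * h ^ 2)
    (hPdiff : ∀ z ∈ D, |p z - ph z| ≤ C * h ^ (k + 1))
    (hGdiff : ∀ z ∈ D, ‖gradient p z - gradient ph z‖ ≤ C * h ^ k)
    (hsmall : L * (C * h) + L' * (C * h ^ 2) ≤ 1 - c)
    (x y : EuclideanSpace ℝ (Fin 2)) (hx : x ∈ D) (hy : y ∈ D)
    (heq : x - y = p y • gradient p y - ph x • gradient ph x) :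
    ‖x - y‖ ≤ (2 * C ^ 2 / c) * h ^ (k + 2)
      ∧ |ph x - p y| ≤ C * h ^ (k + 1) + L * ‖x - y‖
      ∧ C * h ^ (k + 1) + L * ‖x - y‖ ≤ (C + 2 * C ^ 3 / c) * h ^ (k + 1) :=
  stmt10_general C c h k hC hc h0 h1 D p ph L L' hLip hLip' hL hGp hPh hPdiff hGdiff hsmall x y hx
    hy heq
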